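/- Let K = ℚ(√-3), with O_{K,2} the completion of O_K at the inert prime 2. Then the quotient group O_{K,2}^× / (ℤ₂^× · (1 + 4·O_{K,2})) is cyclic of order 6, generated by the images of ω₂ (of order 3) and 1+2ω₂ (of order 2). -/

import Mathlib

/-!
Reduction modulo 4 maps `O_{K,2} ≅ ℤ₂[ω]` onto `(ℤ/4)[ω]` and reflects units, since an element of
`ℤ₂[ω]` is a unit exactly when its norm is a unit of `ℤ₂`. Hence it induces a surjection from
`O_{K,2}^×` onto the 12 units of `(ℤ/4)[ω]`, and a unit `r + sω` lies in `ℤ₂^× · (1 + 4 O_{K,2})`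
exactly when `4 ∣ s`, i.e. when its reduction lies in `(ℤ/4)^×`, a subgroup of order 2. So the
quotient has order 6; in it `ω₂` has order 3 and `1 + 2ω₂` has order 2 (as `(1 + 2ω₂)² = 1 - 4`),
so their product generates it.
-/

open Polynomial

/-- `O_{K,2} = ℤ₂[ω]`, the completion of the ring of integers of `K = ℚ(√-3)` at the
inert prime `2`, realized as `ℤ₂[X]/(X²+X+1)` (the unramified quadratic extension of
`ℤ₂`, with residue field `𝔽₄`). -/
abbrev OK2 : Type := AdjoinRoot (X ^ 2 + X + 1 : Polynomial ℤ_[2])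

/-- The image `ω₂` of `ω` in `O_{K,2}`. -/
noncomputable abbrev ω2 : OK2 := AdjoinRoot.root _

/-- The subgroup `ℤ₂^× · (1 + 4 O_{K,2})` of `O_{K,2}^×`. -/
noncomputable def H2 : Subgroup OK2ˣ :=
  Subgroup.closure {u : OK2ˣ |
    (∃ z : ℤ_[2], (u : OK2) = AdjoinRoot.of _ z) ∨ (∃ y : OK2, (u : OK2) = 1 + 4 * y)}

namespace QuadraticAlgebra

variable {R S : Type*} [CommRing R] [CommRing S] {a b : R} {a' b' : S}

def mapRingHom (f : R →+* S) (ha : f a = a') (hb : f b = b') :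
    QuadraticAlgebra R a b →+* QuadraticAlgebra S a' b' where
  toFun z := ⟨f z.re, f z.im⟩
  map_one' := by ext <;> simp
  map_mul' z w := by ext <;> simp [← ha, ← hb]
  map_zero' := by ext <;> simp
  map_add' z w := by ext <;> simp

section mapRingHom

variable (f : R →+* S) (ha : f a = a') (hb : f b = b')

@[simp] theorem re_mapRingHom (z : QuadraticAlgebra R a b) : (mapRingHom f ha hb z).re = f z.re :=
  rfl

@[simp] theorem im_mapRingHom (z : QuadraticAlgebra R a b) : (mapRingHom f ha hb z).im = f z.im :=
  rfl

theorem norm_mapRingHom (z : QuadraticAlgebra R a b) :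
    norm (mapRingHom f ha hb z) = f (norm z) := by
  simp [norm_def, ← ha, ← hb]

theorem mapRingHom_surjective (hf : Function.Surjective f) :
    Function.Surjective (mapRingHom f ha hb) := fun z ↦ by
  obtain ⟨x, hx⟩ := hf z.re
  obtain ⟨y, hy⟩ := hf z.im
  exact ⟨⟨x, y⟩, by ext <;> simp [hx, hy]⟩

instance isLocalHom_mapRingHom [IsLocalHom f] : IsLocalHom (mapRingHom f ha hb) where
  map_nonunit z hz := by
    rw [isUnit_iff_norm_isUnit, norm_mapRingHom] at hz
    exact isUnit_iff_norm_isUnit.2 (hz.of_map f)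

end mapRingHom

theorem isUnit_re_of_im_eq_zero {z : QuadraticAlgebra R a b} (hz : IsUnit z) (him : z.im = 0) :
    IsUnit z.re := by
  obtain ⟨w, hw⟩ := hz.exists_right_inv
  have h := congrArg re hw
  rw [re_mul, him, mul_zero, zero_mul, add_zero, re_one] at h
  exact .of_mul_eq_one _ h

theorem mem_range_unitsMap_algebraMap_iff (w : (QuadraticAlgebra R a b)ˣ) :
    w ∈ (Units.map (algebraMap R (QuadraticAlgebra R a b)).toMonoidHom).range ↔
      (w : QuadraticAlgebra R a b).im = 0 := by
  refine ⟨fun ⟨c, hc⟩ ↦ hc ▸ rfl, fun hw ↦ ?_⟩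
  refine ⟨(isUnit_re_of_im_eq_zero w.isUnit hw).unit, Units.ext ?_⟩
  ext <;> simp [hw]

instance [Fintype R] : Fintype (QuadraticAlgebra R a b) :=
  Fintype.ofEquiv _ (equivProd a b).symm

end QuadraticAlgebra

namespace AdjoinRoot

open scoped QuadraticAlgebra

variable {R : Type*} [CommRing R] {a b : R}

noncomputable def equivQuadraticAlgebra (p : R[X]) (hp : p = X ^ 2 - C b * X - C a) :
    AdjoinRoot p ≃ₐ[R] QuadraticAlgebra R a b :=
  AlgEquiv.ofAlgHom
    (liftAlgHom p (Algebra.ofId R _) ω (by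
      simp [hp, pow_two, QuadraticAlgebra.omega_mul_omega_eq_algebraMap]))
    (QuadraticAlgebra.lift ⟨root p, by
      have h := eval₂_root p
      simp only [hp, eval₂_sub, eval₂_mul, eval₂_pow, eval₂_X, eval₂_C] at h
      rw [Algebra.smul_def, Algebra.smul_def, mul_one, ← pow_two, algebraMap_eq]
      linear_combination h⟩)
    (QuadraticAlgebra.algHom_ext (by simp)) (AdjoinRoot.algHom_ext (by simp))

theorem equivQuadraticAlgebra_root (p : R[X]) (hp : p = X ^ 2 - C b * X - C a) :
    equivQuadraticAlgebra p hp (root p) = ω := by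
  simp [equivQuadraticAlgebra]

theorem equivQuadraticAlgebra_symm_mk (p : R[X]) (hp : p = X ^ 2 - C b * X - C a) (x y : R) :
    (equivQuadraticAlgebra p hp).symm ⟨x, y⟩ = of p x + of p y * root p := by
  rw [QuadraticAlgebra.mk_eq_add_smul_omega, map_add, map_smul, AlgEquiv.commutes,
    ← equivQuadraticAlgebra_root p hp, AlgEquiv.symm_apply_apply, Algebra.smul_def]
  rfl

end AdjoinRoot

theorem PadicInt.toZModPow_surjective {p : ℕ} [Fact p.Prime] (n : ℕ) :
    Function.Surjective (PadicInt.toZModPow (p := p) n) := fun x ↦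
  ⟨x.val, by rw [map_natCast, ZMod.natCast_zmod_val]⟩

instance PadicInt.isLocalHom_toZModPow {p : ℕ} [Fact p.Prime] {n : ℕ} [NeZero n] :
    IsLocalHom (PadicInt.toZModPow (p := p) n) :=
  have : Fact (1 < p ^ n) := ⟨Nat.one_lt_pow (NeZero.ne n) (Fact.out : p.Prime).one_lt⟩
  .of_surjective _ (toZModPow_surjective n)

theorem Subgroup.isCyclic_and_closure_pair_eq_top {G : Type*} [CommGroup G] [Finite G] {x y : G}
    (hxy : (orderOf x).Coprime (orderOf y)) (hcard : Nat.card G = orderOf x * orderOf y) :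
    IsCyclic G ∧ closure {x, y} = ⊤ := by
  have hord : orderOf (x * y) = Nat.card G :=
    ((Commute.all x y).orderOf_mul_eq_mul_orderOf_of_coprime hxy).trans hcard.symm
  refine ⟨isCyclic_of_orderOf_eq_card _ hord, eq_top_iff.2 ?_⟩
  calc ⊤ = zpowers (x * y) := (eq_top_of_card_eq _ (by rw [Nat.card_zpowers, hord])).symm
    _ ≤ closure {x, y} := zpowers_le.2 <|
      mul_mem (subset_closure (Set.mem_insert x _)) (subset_closure (Set.mem_insert_of_mem x rfl))

theorem QuotientGroup.orderOf_mk_eq_prime {G : Type*} [Group G] {H : Subgroup G} [H.Normal]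
    {p : ℕ} [Fact p.Prime] {g : G} (hp : g ^ p ∈ H) (hg : g ∉ H) : orderOf (g : G ⧸ H) = p :=
  orderOf_eq_prime (by rwa [← mk_pow, eq_one_iff]) (by rwa [Ne, eq_one_iff])

theorem Polynomial.X_sq_add_X_add_one_eq {R : Type*} [CommRing R] :
    (X ^ 2 + X + 1 : R[X]) = X ^ 2 - C (-1) * X - C (-1) := by
  simp only [map_neg, map_one]; ring

namespace OK2

open QuadraticAlgebra

noncomputable def toQuadraticAlgebra : OK2 ≃ₐ[ℤ_[2]] QuadraticAlgebra ℤ_[2] (-1) (-1) :=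
  AdjoinRoot.equivQuadraticAlgebra _ X_sq_add_X_add_one_eq

noncomputable def reduceMod4 : OK2 →+* QuadraticAlgebra (ZMod 4) (-1) (-1) :=
  (mapRingHom (PadicInt.toZModPow 2) (by simp) (by simp)).comp
    (toQuadraticAlgebra : OK2 →+* QuadraticAlgebra ℤ_[2] (-1) (-1))

instance : IsLocalHom reduceMod4 :=
  RingHom.isLocalHom_comp _ (toQuadraticAlgebra : OK2 →+* QuadraticAlgebra ℤ_[2] (-1) (-1))

theorem reduceMod4_surjective : Function.Surjective reduceMod4 := by
  rw [reduceMod4, RingHom.coe_comp]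
  exact (mapRingHom_surjective _ _ _ (PadicInt.toZModPow_surjective 2)).comp
    toQuadraticAlgebra.surjective

theorem reduceMod4_of (z : ℤ_[2]) :
    reduceMod4 (AdjoinRoot.of _ z) = algebraMap _ _ (PadicInt.toZModPow 2 z) := by
  ext <;> simp [reduceMod4, toQuadraticAlgebra, AdjoinRoot.equivQuadraticAlgebra]

theorem reduceMod4_root : reduceMod4 ω2 = ω := by
  ext <;> simp [reduceMod4, toQuadraticAlgebra, AdjoinRoot.equivQuadraticAlgebra_root]

theorem omega2_sq_add_omega2_add_one : ω2 ^ 2 + ω2 + 1 = 0 := by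
  have h := AdjoinRoot.eval₂_root (X ^ 2 + X + 1 : ℤ_[2][X])
  rwa [eval₂_add, eval₂_add, eval₂_pow, eval₂_X, eval₂_one] at h

theorem mem_H2_of_val_eq_of {u : OK2ˣ} (z : ℤ_[2]) (h : (u : OK2) = AdjoinRoot.of _ z) :
    u ∈ H2 :=
  Subgroup.subset_closure (Or.inl ⟨z, h⟩)

theorem mem_H2_of_val_eq_one_add_four_mul {u : OK2ˣ} (y : OK2) (h : (u : OK2) = 1 + 4 * y) :
    u ∈ H2 :=
  Subgroup.subset_closure (Or.inr ⟨y, h⟩)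

/-- Writing `u = r + 4tω` with `r ∈ ℤ₂^×`, we have `u = r · (1 + 4 r⁻¹tω)`. -/
theorem mem_H2_of_im_reduceMod4_eq_zero {u : OK2ˣ} (hu : (reduceMod4 u).im = 0) : u ∈ H2 := by
  set r := (toQuadraticAlgebra u).re
  have hs : (toQuadraticAlgebra u).im ∈ RingHom.ker (PadicInt.toZModPow (p := 2) 2) := hu
  rw [PadicInt.ker_toZModPow, Ideal.mem_span_singleton] at hs
  obtain ⟨t, ht⟩ := hs
  have : IsLocalHom (PadicInt.toZModPow 2 : ℤ_[2] →+* ZMod 4) := PadicInt.isLocalHom_toZModPow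
  have hr : IsUnit r :=
    (isUnit_re_of_im_eq_zero (u.isUnit.map reduceMod4) hu).of_map (PadicInt.toZModPow 2) r
  have hu_eq : (u : OK2) = AdjoinRoot.of _ r + AdjoinRoot.of _ (4 * t) * ω2 := by
    rw [← AdjoinRoot.equivQuadraticAlgebra_symm_mk _ X_sq_add_X_add_one_eq,
      show (4 : ℤ_[2]) = (2 : ℕ) ^ 2 by norm_num, ← ht]
    exact (toQuadraticAlgebra.symm_apply_apply _).symm
  obtain ⟨c, hc⟩ := hr
  set w : OK2ˣ := Units.map (AdjoinRoot.of _).toMonoidHom c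
  have hw : w ∈ H2 := mem_H2_of_val_eq_of c rfl
  have hwu : w⁻¹ * u ∈ H2 := by
    refine mem_H2_of_val_eq_one_add_four_mul (AdjoinRoot.of _ (↑c⁻¹ * t) * ω2) ?_
    have h := congrArg (AdjoinRoot.of (X ^ 2 + X + 1 : ℤ_[2][X])) c.inv_mul
    simp only [w, Units.val_mul, Units.coe_map_inv, hu_eq, ← hc, map_mul, map_ofNat,
      map_one] at h ⊢
    linear_combination h
  simpa using mul_mem hw hwu

abbrev unitsZMod4 : Subgroup (QuadraticAlgebra (ZMod 4) (-1) (-1))ˣ :=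
  (Units.map (algebraMap (ZMod 4) (QuadraticAlgebra (ZMod 4) (-1) (-1))).toMonoidHom).range

theorem H2_eq_comap : H2 = unitsZMod4.comap (Units.map reduceMod4.toMonoidHom) := by
  refine le_antisymm ((Subgroup.closure_le _).2 ?_) fun u hu ↦ ?_
  · have h4 : (4 : QuadraticAlgebra (ZMod 4) (-1) (-1)) = 0 := by decide
    rintro u (⟨z, hz⟩ | ⟨y, hy⟩) <;>
      rw [SetLike.mem_coe, Subgroup.mem_comap, mem_range_unitsMap_algebraMap_iff] <;>
      change (reduceMod4 u).im = 0
    · rw [hz, reduceMod4_of]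
      rfl
    · rw [hy, map_add, map_one, map_mul, map_ofNat, h4, zero_mul, add_zero]
      rfl
  · rw [Subgroup.mem_comap, mem_range_unitsMap_algebraMap_iff] at hu
    exact mem_H2_of_im_reduceMod4_eq_zero hu

theorem mem_H2_iff (u : OK2ˣ) : u ∈ H2 ↔ (reduceMod4 u).im = 0 := by
  rw [H2_eq_comap, Subgroup.mem_comap, mem_range_unitsMap_algebraMap_iff]
  rfl

theorem card_unitsZMod4 : Nat.card unitsZMod4 = 2 := by
  rw [← Nat.card_congr (MonoidHom.ofInjective (Units.map_injective algebraMap_injective)).toEquiv,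
    Nat.card_eq_fintype_card]
  decide

theorem card_units_quadraticAlgebra_zmod4 :
    Nat.card (QuadraticAlgebra (ZMod 4) (-1) (-1))ˣ = 12 := by
  rw [Nat.card_eq_fintype_card]
  decide

theorem index_H2 : H2.index = 6 := by
  have h := unitsZMod4.index_mul_card
  rw [card_unitsZMod4, card_units_quadraticAlgebra_zmod4] at h
  rw [H2_eq_comap, Subgroup.index_comap_of_surjective _
    (IsLocalRing.surjective_units_map_of_local_ringHom _ reduceMod4_surjective inferInstance)]
  omega

theorem omega2_pow_three : ω2 ^ 3 = 1 := by
  linear_combination (ω2 - 1) * omega2_sq_add_omega2_add_one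

theorem one_add_two_mul_omega2_sq : (1 + 2 * ω2) ^ 2 = 1 + 4 * (-1) := by
  linear_combination 4 * omega2_sq_add_omega2_add_one

theorem isUnit_omega2 : IsUnit ω2 :=
  .of_mul_eq_one (-1 - ω2) (by linear_combination -omega2_sq_add_omega2_add_one)

theorem reduceMod4_one_add_two_mul_omega2 : reduceMod4 (1 + 2 * ω2) = 1 + 2 * ω := by
  rw [map_add, map_one, map_mul, map_ofNat, reduceMod4_root]

theorem isUnit_one_add_two_mul_omega2 : IsUnit (1 + 2 * ω2) :=
  .of_map reduceMod4 _ <|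
    reduceMod4_one_add_two_mul_omega2 ▸ .of_mul_eq_one (1 + 2 * ω) (by decide)

theorem orderOf_mk_omega2 {u : OK2ˣ} (hu : (u : OK2) = ω2) : orderOf (u : OK2ˣ ⧸ H2) = 3 :=
  QuotientGroup.orderOf_mk_eq_prime
    (mem_H2_of_val_eq_of 1 (by rw [Units.val_pow_eq_pow_val, hu, omega2_pow_three, map_one]))
    (by rw [mem_H2_iff, hu, reduceMod4_root]; decide)

theorem orderOf_mk_one_add_two_mul_omega2 {v : OK2ˣ} (hv : (v : OK2) = 1 + 2 * ω2) :
    orderOf (v : OK2ˣ ⧸ H2) = 2 :=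
  QuotientGroup.orderOf_mk_eq_prime
    (mem_H2_of_val_eq_one_add_four_mul (-1) (by
      rw [Units.val_pow_eq_pow_val, hv, one_add_two_mul_omega2_sq]))
    (by rw [mem_H2_iff, hv, reduceMod4_one_add_two_mul_omega2]; decide)

end OK2

/-- `O_{K,2}^× / (ℤ₂^× · (1 + 4 O_{K,2}))` is cyclic of order `6`, generated by the
images of `ω₂` (of order 3) and `1 + 2ω₂` (of order 2). -/
theorem stmt6 :
    IsCyclic (OK2ˣ ⧸ H2) ∧ Nat.card (OK2ˣ ⧸ H2) = 6 ∧
    ∃ u v : OK2ˣ, (u : OK2) = ω2 ∧ (v : OK2) = 1 + 2 * ω2 ∧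
      orderOf (QuotientGroup.mk u : OK2ˣ ⧸ H2) = 3 ∧
      orderOf (QuotientGroup.mk v : OK2ˣ ⧸ H2) = 2 ∧
      Subgroup.closure {(QuotientGroup.mk u : OK2ˣ ⧸ H2), QuotientGroup.mk v} = ⊤ := by
  obtain ⟨u, hu⟩ := OK2.isUnit_omega2
  obtain ⟨v, hv⟩ := OK2.isUnit_one_add_two_mul_omega2
  have hcard : Nat.card (OK2ˣ ⧸ H2) = 6 := OK2.index_H2
  have : Finite (OK2ˣ ⧸ H2) := Nat.finite_of_card_ne_zero (by omega)
  have hu3 := OK2.orderOf_mk_omega2 hu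
  have hv2 := OK2.orderOf_mk_one_add_two_mul_omega2 hv
  obtain ⟨hcyc, hgen⟩ := Subgroup.isCyclic_and_closure_pair_eq_top (x := (u : OK2ˣ ⧸ H2)) (y := v)
    (by rw [hu3, hv2]; norm_num) (by rw [hcard, hu3, hv2])
  exact ⟨hcyc, hcard, u, v, hu, hv, hu3, hv2, hgen⟩
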